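/- Define κ : ℝ → ℝ by κ(t) = {t/2} + 1/2 − {t/2 + 1/2}, where {x} is the fractional part of x. Then for every complex number s with Re(s) > 0, s · ∫₁^∞ κ(t) · t^(−s−1) dt = Σ_{k=1}^∞ ∫_{2k−1}^{2k} s · t^(−s−1) dt, where the series on the right converges. -/

import Mathlib

/-!
Since `κ t = ⌊t/2 + 1/2⌋ - ⌊t/2⌋`, `κ` is the indicator function of `⋃ₖ [2k+1, 2k+2)`. It is
bounded, so `κ t · t^(-s-1)` is integrable on `(1, ∞)`, and countable additivity of the integral
over the blocks `(2k+1, 2k+3]` gives the series: on each block the integrand agrees with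
`t^(-s-1)` on the first half and vanishes on the second.
-/

noncomputable def kappa (t : ℝ) : ℝ := Int.fract (t / 2) + 1 / 2 - Int.fract (t / 2 + 1 / 2)

open Set MeasureTheory

section OrderedAddCommGroup

variable {α : Type*} [AddCommGroup α] [LinearOrder α] [IsOrderedAddMonoid α]

theorem pairwise_disjoint_Ioc_add_nsmul (a p : α) :
    Pairwise (Function.onFun Disjoint fun n : ℕ => Ioc (a + n • p) (a + (n + 1) • p)) := by
  intro m n hmn
  simpa only [Function.onFun, ← Nat.cast_add_one, natCast_zsmul] using
    pairwise_disjoint_Ioc_add_zsmul a p (Nat.cast_injective.ne hmn)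

theorem iUnion_Ioc_add_nsmul [Archimedean α] {p : α} (hp : 0 < p) (a : α) :
    ⋃ n : ℕ, Ioc (a + n • p) (a + (n + 1) • p) = Ioi a := by
  ext t
  simp only [mem_iUnion, mem_Ioi]
  constructor
  · rintro ⟨n, hn, -⟩
    exact (le_add_of_nonneg_right (nsmul_nonneg hp.le n)).trans_lt hn
  · intro ht
    obtain ⟨n, hn⟩ := mem_iUnion.mp ((iUnion_Ioc_add_zsmul hp a).symm ▸ mem_univ t)
    have hn₀ : 0 ≤ n := by
      have : (0 : ℤ) • p < (n + 1) • p := by simpa using ht.trans_le hn.2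
      have := (zsmul_lt_zsmul_iff_left hp).mp this
      omega
    lift n to ℕ using hn₀
    exact ⟨n, by simpa only [natCast_zsmul, ← Nat.cast_succ] using hn⟩

end OrderedAddCommGroup

theorem hasSum_setIntegral_Ioc_of_integrableOn_Ioi {E : Type*} [NormedAddCommGroup E]
    [NormedSpace ℝ E] {μ : Measure ℝ} {f : ℝ → E} {a p : ℝ} (hp : 0 < p)
    (hf : IntegrableOn f (Ioi a) μ) :
    HasSum (fun n : ℕ => ∫ t in Ioc (a + n • p) (a + (n + 1) • p), f t ∂μ)
      (∫ t in Ioi a, f t ∂μ) := by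
  rw [← iUnion_Ioc_add_nsmul hp a] at hf ⊢
  exact hasSum_integral_iUnion (fun _ => measurableSet_Ioc)
    (pairwise_disjoint_Ioc_add_nsmul a p) hf

theorem kappa_eq_floor_sub_floor (t : ℝ) : kappa t = ⌊t / 2 + 1 / 2⌋ - ⌊t / 2⌋ := by
  rw [kappa, Int.fract, Int.fract]
  ring

theorem kappa_mem_Icc (t : ℝ) : kappa t ∈ Icc (0 : ℝ) 1 := by
  have h₀ : ⌊t / 2⌋ ≤ ⌊t / 2 + 1 / 2⌋ := Int.floor_mono (by linarith)
  have h₁ : ⌊t / 2 + 1 / 2⌋ ≤ ⌊t / 2⌋ + 1 := by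
    rw [← Int.floor_add_one]
    exact Int.floor_mono (by linarith)
  rw [kappa_eq_floor_sub_floor]
  constructor <;> exact_mod_cast (by omega)

theorem measurable_kappa : Measurable kappa := by
  unfold kappa
  fun_prop

theorem kappa_eq_one_of_mem_Ico {k : ℤ} {t : ℝ} (ht : t ∈ Ico (2 * k + 1 : ℝ) (2 * k + 2)) :
    kappa t = 1 := by
  have h₁ : ⌊t / 2⌋ = k := by
    rw [Int.floor_eq_iff]
    constructor <;> linarith [ht.1, ht.2]
  have h₂ : ⌊t / 2 + 1 / 2⌋ = k + 1 := by
    rw [Int.floor_eq_iff]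
    push_cast
    constructor <;> linarith [ht.1, ht.2]
  rw [kappa_eq_floor_sub_floor, h₁, h₂]
  push_cast
  ring

theorem kappa_eq_zero_of_mem_Ico {k : ℤ} {t : ℝ} (ht : t ∈ Ico (2 * k : ℝ) (2 * k + 1)) :
    kappa t = 0 := by
  have h₁ : ⌊t / 2⌋ = k := by
    rw [Int.floor_eq_iff]
    constructor <;> linarith [ht.1, ht.2]
  have h₂ : ⌊t / 2 + 1 / 2⌋ = k := by
    rw [Int.floor_eq_iff]
    constructor <;> linarith [ht.1, ht.2]
  rw [kappa_eq_floor_sub_floor, h₁, h₂, sub_self]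

theorem kappa_eq_indicator_of_mem_Ico {k : ℤ} {t : ℝ}
    (ht : t ∈ Ico (2 * k + 1 : ℝ) (2 * k + 3)) :
    kappa t = (Iio (2 * k + 2 : ℝ)).indicator 1 t := by
  by_cases h : t < 2 * k + 2
  · rw [indicator_of_mem (mem_Iio.mpr h), kappa_eq_one_of_mem_Ico ⟨ht.1, h⟩, Pi.one_apply]
  · rw [indicator_of_notMem (mt mem_Iio.mp h),
      kappa_eq_zero_of_mem_Ico (k := k + 1)
        ⟨by push_cast; linarith, by push_cast; linarith [ht.2]⟩]

theorem Integrable.kappa_mul {μ : Measure ℝ} {g : ℝ → ℂ} (hg : Integrable g μ) :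
    Integrable (fun t => (kappa t : ℂ) * g t) μ :=
  hg.bdd_mul (c := 1) (Complex.measurable_ofReal.comp measurable_kappa).aestronglyMeasurable
    (ae_of_all _ fun t => by
      rw [Complex.norm_real, Real.norm_of_nonneg (kappa_mem_Icc t).1]
      exact (kappa_mem_Icc t).2)

theorem setIntegral_Ioc_kappa_mul (g : ℝ → ℂ) (k : ℤ) :
    ∫ t in Ioc (2 * k + 1 : ℝ) (2 * k + 3), (kappa t : ℂ) * g t =
      ∫ t in (2 * k + 1 : ℝ)..(2 * k + 2), g t := by
  have hIoo :
      Ioo (2 * k + 1 : ℝ) (2 * k + 2) = Ioo (2 * k + 1 : ℝ) (2 * k + 3) ∩ Iio (2 * k + 2) := by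
    rw [Ioo_inter_Iio, min_eq_right (by linarith)]
  rw [intervalIntegral.integral_of_le (by linarith), integral_Ioc_eq_integral_Ioo,
    integral_Ioc_eq_integral_Ioo, hIoo, ← setIntegral_indicator measurableSet_Iio]
  refine setIntegral_congr_fun measurableSet_Ioo fun t ht => ?_
  rw [kappa_eq_indicator_of_mem_Ico (Ioo_subset_Ico_self ht)]
  by_cases h : t < 2 * k + 2 <;> simp [h]

theorem integral_eq_sum_of_integrals (s : ℂ) (hs : 0 < s.re) :
    (Summable fun k : ℕ =>
      ∫ t in (2 * (k : ℝ) + 1)..(2 * (k : ℝ) + 2), s * (t : ℂ) ^ (-s - 1)) ∧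
    s * ∫ t in Set.Ioi (1 : ℝ), (kappa t : ℂ) * (t : ℂ) ^ (-s - 1) =
      ∑' k : ℕ, ∫ t in (2 * (k : ℝ) + 1)..(2 * (k : ℝ) + 2), s * (t : ℂ) ^ (-s - 1) := by
  have hcpow : IntegrableOn (fun t : ℝ => (t : ℂ) ^ (-s - 1)) (Ioi 1) :=
    integrableOn_Ioi_cpow_of_lt
      (by simp only [Complex.sub_re, Complex.neg_re, Complex.one_re]; linarith) one_pos
  have hsum :=
    (hasSum_setIntegral_Ioc_of_integrableOn_Ioi two_pos (Integrable.kappa_mul hcpow)).mul_left s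
  have hterm (n : ℕ) :
      s * ∫ t in Ioc (1 + n • 2 : ℝ) (1 + (n + 1) • 2), (kappa t : ℂ) * (t : ℂ) ^ (-s - 1) =
        ∫ t in (2 * (n : ℝ) + 1)..(2 * (n : ℝ) + 2), s * (t : ℂ) ^ (-s - 1) := by
    have hIoc :
        Ioc (1 + n • 2 : ℝ) (1 + (n + 1) • 2) = Ioc (2 * (n : ℤ) + 1 : ℝ) (2 * (n : ℤ) + 3) := by
      congr 1 <;> simp only [nsmul_eq_mul, Int.cast_natCast, Nat.cast_add, Nat.cast_one] <;> ring
    rw [hIoc, setIntegral_Ioc_kappa_mul, intervalIntegral.integral_const_mul, Int.cast_natCast]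
  simp only [hterm] at hsum
  exact ⟨hsum.summable, hsum.tsum_eq.symm⟩
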